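/- Let R and S be linear collapse-free TRSs over disjoint ranked alphabets Σ and Δ respectively, let Γ be a ranked alphabet with Σ ∪ Δ ⊆ Γ, and consider R and S as TRSs over Γ. Then →_S ∘ →_R ⊆ →_R ∪ (→_R ∘ →_S), i.e., whenever u →_S v →_R w for terms u, v, w over Γ, either u →_R w, or there exists v′ with u →_R v′ →_S w. -/

import Mathlib

set_option autoImplicit false

/-!
Basic framework: ranked alphabets, terms, term rewrite systems,
bottom-up tree automata, recognizability.
A ranked alphabet is modelled by a (finite) type `σ` together with an
arity function `ar : σ → ℕ`.  `Tm.var n` denotes the variable `x_{n+1}`,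
so `T_Σ(X_m)` corresponds to terms all of whose variables satisfy `n < m`,
and ground terms (`T_Σ`) are terms satisfying `Tm.Ground`.
-/

/-- Terms over the ranked alphabet `(σ, ar)` with variables `x₁, x₂, …`
(`var n` is `x_{n+1}`). -/
inductive Tm (σ : Type) (ar : σ → ℕ) : Type
  | var : ℕ → Tm σ ar
  | app : (f : σ) → (Fin (ar f) → Tm σ ar) → Tm σ ar

namespace Tm

variable {σ γ : Type} {ar : σ → ℕ} {arγ : γ → ℕ}

/-- Application of a substitution `θ` (assigning a term to each variable). -/
def subst (θ : ℕ → Tm σ ar) : Tm σ ar → Tm σ ar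
  | var n => θ n
  | app f ts => app f fun i => (ts i).subst θ

/-- A term is ground if it contains no variables. -/
def Ground : Tm σ ar → Prop
  | var _ => False
  | app _ ts => ∀ i, (ts i).Ground

/-- The set of (indices of) variables occurring in a term. -/
def vars : Tm σ ar → Set ℕ
  | var n => {n}
  | app _ ts => ⋃ i, (ts i).vars

/-- Number of occurrences of the variable `x_{n+1}` in a term. -/
def count (n : ℕ) : Tm σ ar → ℕ
  | var m => if m = n then 1 else 0
  | app _ ts => ∑ i, (ts i).count n

/-- A term is linear if every variable occurs at most once in it. -/
def Linear (t : Tm σ ar) : Prop := ∀ n, t.count n ≤ 1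

/-- The symbol `s` occurs in the term. -/
def symOccurs (s : σ) : Tm σ ar → Prop
  | var _ => False
  | app f ts => f = s ∨ ∃ i, (ts i).symOccurs s

/-- Height of a term (constants and variables have height 0). -/
def height : Tm σ ar → ℕ
  | var _ => 0
  | app _ ts => Finset.univ.sup fun i => (ts i).height + 1

/-- Renaming of the alphabet along an arity-preserving map. -/
def map (ι : σ → γ) (h : ∀ s, arγ (ι s) = ar s) : Tm σ ar → Tm γ arγ
  | var n => var n
  | app f ts => app (ι f) fun i => (ts (Fin.cast (h f) i)).map ι h

/-- The subterm of `t` at a position (a list of argument indices), if defined. -/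
def subAt : Tm σ ar → List ℕ → Option (Tm σ ar)
  | t, [] => some t
  | var _, _ :: _ => none
  | app f ts, i :: p => if h : i < ar f then (ts ⟨i, h⟩).subAt p else none

/-- Subterm relation. -/
inductive Subtm : Tm σ ar → Tm σ ar → Prop
  | refl (t : Tm σ ar) : Subtm t t
  | app {s : Tm σ ar} {f : σ} {ts : Fin (ar f) → Tm σ ar} (i : Fin (ar f)) :
      Subtm s (ts i) → Subtm s (Tm.app f ts)

end Tm

section Rewriting

variable {σ γ : Type} {ar : σ → ℕ} {arγ : γ → ℕ}

/-- One-step rewriting by the rule set `R`: apply a rule under a substitution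
at the root, or rewrite inside one argument. -/
inductive Step (R : Set (Tm σ ar × Tm σ ar)) : Tm σ ar → Tm σ ar → Prop
  | rule {l r : Tm σ ar} (θ : ℕ → Tm σ ar) (h : (l, r) ∈ R) :
      Step R (l.subst θ) (r.subst θ)
  | congr {f : σ} {ts : Fin (ar f) → Tm σ ar} {t' : Tm σ ar} (i : Fin (ar f)) :
      Step R (ts i) t' → Step R (Tm.app f ts) (Tm.app f (Function.update ts i t'))

/-- Many-step rewriting: reflexive-transitive closure of `Step`. -/
def Steps (R : Set (Tm σ ar × Tm σ ar)) : Tm σ ar → Tm σ ar → Prop :=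
  Relation.ReflTransGen (Step R)

/-- `R` is a term rewrite system: finitely many rules, and every variable of a
right-hand side occurs in the corresponding left-hand side. -/
def IsTRS (R : Set (Tm σ ar × Tm σ ar)) : Prop :=
  R.Finite ∧ ∀ lr ∈ R, lr.2.vars ⊆ lr.1.vars

/-- The set `R*(L)` of descendants of members of `L`. -/
def Desc (R : Set (Tm σ ar × Tm σ ar)) (L : Set (Tm σ ar)) : Set (Tm σ ar) :=
  {p | ∃ q ∈ L, Steps R q p}

/-- `R` is terminating: there is no infinite reduction sequence. -/
def Terminating (R : Set (Tm σ ar × Tm σ ar)) : Prop :=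
  ¬ ∃ f : ℕ → Tm σ ar, ∀ n, Step R (f n) (f (n + 1))

/-- `R` is confluent. -/
def Confluent (R : Set (Tm σ ar × Tm σ ar)) : Prop :=
  ∀ a b c, Steps R a b → Steps R a c → ∃ d, Steps R b d ∧ Steps R c d

/-- `u` is an `R`-normal form of `t`. -/
def NormalFormOf (R : Set (Tm σ ar × Tm σ ar)) (t u : Tm σ ar) : Prop :=
  Steps R t u ∧ ¬ ∃ v, Step R u v

/-- The term is a variable. -/
def IsVarTm (t : Tm σ ar) : Prop := ∃ n, t = Tm.var n

/-- Every left-hand side is linear. -/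
def LeftLinearTRS (R : Set (Tm σ ar × Tm σ ar)) : Prop :=
  ∀ lr ∈ R, lr.1.Linear

/-- All left- and right-hand sides are linear. -/
def LinearTRS (R : Set (Tm σ ar × Tm σ ar)) : Prop :=
  ∀ lr ∈ R, lr.1.Linear ∧ lr.2.Linear

/-- No rule has a variable as left-hand side or as right-hand side. -/
def CollapseFree (R : Set (Tm σ ar × Tm σ ar)) : Prop :=
  ∀ lr ∈ R, ¬ IsVarTm lr.1 ∧ ¬ IsVarTm lr.2

/-- Transport of a rule set along an arity-preserving renaming of the alphabet. -/
def mapRules (ι : σ → γ) (h : ∀ s, arγ (ι s) = ar s) (R : Set (Tm σ ar × Tm σ ar)) :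
    Set (Tm γ arγ × Tm γ arγ) :=
  (fun lr => (lr.1.map ι h, lr.2.map ι h)) '' R

end Rewriting

/-- A bottom-up tree automaton over `(σ, ar)` with state type `Q`:
transition rules `δ(q₁,…,qₙ) → q`, λ-rules `q → q'`, and final states. -/
structure BTA (σ : Type) (ar : σ → ℕ) (Q : Type) where
  trans : ∀ f : σ, (Fin (ar f) → Q) → Q → Prop
  eps : Q → Q → Prop
  final : Q → Prop

namespace BTA

variable {σ : Type} {ar : σ → ℕ} {Q : Type}

/-- `t →* q`: the (ground) term `t` can be rewritten to the state `q`. -/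
inductive Reach (A : BTA σ ar Q) : Tm σ ar → Q → Prop
  | app {f : σ} {ts : Fin (ar f) → Tm σ ar} {qs : Fin (ar f) → Q} {q : Q} :
      (∀ i, Reach A (ts i) (qs i)) → A.trans f qs q → Reach A (Tm.app f ts) q
  | eps {t : Tm σ ar} {q q' : Q} : Reach A t q → A.eps q q' → Reach A t q'

/-- The tree language recognized by the automaton. -/
def Lang (A : BTA σ ar Q) : Set (Tm σ ar) := {t | ∃ q, A.final q ∧ A.Reach t q}

end BTA

/-- A tree language is recognizable if some bottom-up tree automaton with a
finite state set recognizes it. -/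
def Recognizable {σ : Type} {ar : σ → ℕ} (L : Set (Tm σ ar)) : Prop :=
  ∃ (Q : Type) (_ : Finite Q) (A : BTA σ ar Q), A.Lang = L

/-- `R` (a TRS over all of `σ`, thought of as `sign(R)`) preserves
recognizability of finite tree languages: for every ranked alphabet extending
`σ` (i.e. every finite type with an arity-preserving injection from `σ`) and
every finite tree language of ground terms, the descendant set is recognizable. -/
def PRF {σ : Type} {ar : σ → ℕ} (R : Set (Tm σ ar × Tm σ ar)) : Prop :=
  ∀ (γ : Type) (arγ : γ → ℕ), Finite γ →
    ∀ ι : σ → γ, Function.Injective ι →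
      ∀ h : ∀ s, arγ (ι s) = ar s,
        ∀ L : Set (Tm γ arγ), L.Finite → (∀ t ∈ L, t.Ground) →
          Recognizable (Desc (mapRules ι h R) L)

/-- `R` preserves recognizability: as `PRF`, but for arbitrary recognizable
tree languages. -/
def PR {σ : Type} {ar : σ → ℕ} (R : Set (Tm σ ar × Tm σ ar)) : Prop :=
  ∀ (γ : Type) (arγ : γ → ℕ), Finite γ →
    ∀ ι : σ → γ, Function.Injective ι →
      ∀ h : ∀ s, arγ (ι s) = ar s,
        ∀ L : Set (Tm γ arγ), Recognizable L →
          Recognizable (Desc (mapRules ι h R) L)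

/-!
Call the symbols in the image of `Σ` the `R`-symbols. Left-hand sides of `R` consist of
`R`-symbols, while right-hand sides of `S` are non-variable and contain none, so in
`u →_S v →_R w` neither redex overlaps the pattern of the other. Either the two steps are at
parallel positions and commute; or the `S`-step lies below a variable `x` of the `R`-redex
`l θ`, and firing the `R`-rule first copies the `S`-redex once or not at all, since `x` occurs
at most once in the right-hand side (not at all gives `u →_R w`); or the `R`-step lies below a
variable `x` of the `S`-contractum `r θ`, and as `x` also occurs exactly once in the
left-hand side, the `R`-step can be done first on `u`.
-/

namespace Tm

variable {σ γ : Type} {ar : σ → ℕ} {arγ : γ → ℕ}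

def SymbolsIn (A : Set σ) (t : Tm σ ar) : Prop := ∀ s, t.symOccurs s → s ∈ A

lemma SymbolsIn.mono {A B : Set σ} {t : Tm σ ar} (h : t.SymbolsIn A) (hAB : A ⊆ B) :
    t.SymbolsIn B :=
  fun s hs => hAB (h s hs)

lemma SymbolsIn.head_mem {A : Set σ} {f : σ} {ts : Fin (ar f) → Tm σ ar}
    (h : (app f ts).SymbolsIn A) : f ∈ A :=
  h f (Or.inl rfl)

lemma SymbolsIn.arg {A : Set σ} {f : σ} {ts : Fin (ar f) → Tm σ ar}
    (h : (app f ts).SymbolsIn A) (i : Fin (ar f)) : (ts i).SymbolsIn A :=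
  fun s hs => h s (Or.inr ⟨i, hs⟩)

lemma count_le_count_app {f : σ} (ts : Fin (ar f) → Tm σ ar) (i : Fin (ar f)) (n : ℕ) :
    (ts i).count n ≤ (app f ts).count n :=
  Finset.single_le_sum (f := fun j => (ts j).count n) (fun _ _ => Nat.zero_le _)
    (Finset.mem_univ i)

lemma count_arg_eq_zero {f : σ} {ts : Fin (ar f) → Tm σ ar} {n : ℕ} {i j : Fin (ar f)}
    (hle : (app f ts).count n ≤ 1) (hi : (ts i).count n = 1) (hj : j ≠ i) :
    (ts j).count n = 0 := by
  have := Finset.add_le_sum (f := fun k => (ts k).count n) (fun _ _ => Nat.zero_le _)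
    (Finset.mem_univ i) (Finset.mem_univ j) hj.symm
  simp only [count] at hle
  omega

lemma Linear.arg {f : σ} {ts : Fin (ar f) → Tm σ ar} (h : (app f ts).Linear)
    (i : Fin (ar f)) : (ts i).Linear :=
  fun n => (count_le_count_app ts i n).trans (h n)

lemma mem_vars_iff {t : Tm σ ar} {n : ℕ} : n ∈ t.vars ↔ t.count n ≠ 0 := by
  induction t with
  | var m => simp [vars, count, eq_comm]
  | app f ts ih => simp [vars, count, ih]

lemma subst_update_of_count_eq_zero {t : Tm σ ar} {n : ℕ} (h : t.count n = 0)
    (θ : ℕ → Tm σ ar) (a : Tm σ ar) : t.subst (Function.update θ n a) = t.subst θ := by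
  induction t with
  | var m =>
    have hm : m ≠ n := by simpa [count] using h
    simp [subst, Function.update_of_ne hm]
  | app f ts ih =>
    simp only [count, Finset.sum_eq_zero_iff, Finset.mem_univ, true_implies] at h
    simp only [subst, ih _ (h _)]

lemma update_subst_arg {f : σ} {ts : Fin (ar f) → Tm σ ar} {n : ℕ} {i : Fin (ar f)}
    (hle : (app f ts).count n ≤ 1) (hi : (ts i).count n = 1) (θ : ℕ → Tm σ ar) (a : Tm σ ar) :
    Function.update (fun j => (ts j).subst θ) i ((ts i).subst (Function.update θ n a)) =
      fun j => (ts j).subst (Function.update θ n a) := by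
  funext j
  by_cases hj : j = i
  · subst hj; simp
  · rw [Function.update_of_ne hj, subst_update_of_count_eq_zero (count_arg_eq_zero hle hi hj)]

lemma count_map (ι : σ → γ) (h : ∀ s, arγ (ι s) = ar s) (t : Tm σ ar) (n : ℕ) :
    (t.map ι h).count n = t.count n := by
  induction t with
  | var m => rfl
  | app f ts ih => exact Fintype.sum_equiv (finCongr (h f)) _ _ fun i => ih _

lemma Linear.map {ι : σ → γ} (h : ∀ s, arγ (ι s) = ar s) {t : Tm σ ar} (ht : t.Linear) :
    (t.map ι h).Linear :=
  fun n => (count_map ι h t n).trans_le (ht n)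

lemma vars_map (ι : σ → γ) (h : ∀ s, arγ (ι s) = ar s) (t : Tm σ ar) :
    (t.map ι h).vars = t.vars := by
  ext n
  simp only [mem_vars_iff, count_map]

lemma not_isVarTm_map (ι : σ → γ) (h : ∀ s, arγ (ι s) = ar s) {t : Tm σ ar}
    (ht : ¬IsVarTm t) : ¬IsVarTm (t.map ι h) := by
  cases t with
  | var n => exact absurd ⟨n, rfl⟩ ht
  | app f ts => rintro ⟨n, hn⟩; cases hn

lemma symbolsIn_range_map (ι : σ → γ) (h : ∀ s, arγ (ι s) = ar s) (t : Tm σ ar) :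
    (t.map ι h).SymbolsIn (Set.range ι) := by
  induction t with
  | var n => rintro s ⟨⟩
  | app f ts ih =>
    rintro s (rfl | ⟨i, hi⟩)
    · exact ⟨f, rfl⟩
    · exact ih _ s hi

end Tm

lemma LinearTRS.mapRules {σ γ : Type} {ar : σ → ℕ} {arγ : γ → ℕ} (ι : σ → γ)
    (h : ∀ s, arγ (ι s) = ar s) {R : Set (Tm σ ar × Tm σ ar)} (hR : LinearTRS R) :
    LinearTRS (mapRules ι h R) := by
  rintro _ ⟨lr, hlr, rfl⟩
  exact ⟨(hR lr hlr).1.map h, (hR lr hlr).2.map h⟩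

namespace Step

open Tm

variable {σ : Type} {ar : σ → ℕ} {X : Set (Tm σ ar × Tm σ ar)}

lemma swap {a b : Tm σ ar} (h : Step X a b) : Step (Prod.swap ⁻¹' X) b a := by
  induction h with
  | rule θ hlr => exact rule θ hlr
  | @congr f ts t' i _ ih =>
    have := congr (ts := Function.update ts i t') i (by rwa [Function.update_self])
    rwa [Function.update_idem, Function.update_eq_self] at this

lemma swap_iff {a b : Tm σ ar} : Step (Prod.swap ⁻¹' X) a b ↔ Step X b a :=
  ⟨swap, swap⟩

lemma app_inv {f : σ} {ts : Fin (ar f) → Tm σ ar} {b : Tm σ ar} (h : Step X (app f ts) b) :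
    (∃ l r θ, (l, r) ∈ X ∧ app f ts = l.subst θ ∧ b = r.subst θ) ∨
      ∃ i t', Step X (ts i) t' ∧ b = app f (Function.update ts i t') := by
  obtain ⟨a, ha, h⟩ : ∃ a, app f ts = a ∧ Step X a b := ⟨_, rfl, h⟩
  cases h with
  | rule θ hlr => exact .inl ⟨_, _, θ, hlr, ha, rfl⟩
  | congr i hs =>
    cases ha
    exact .inr ⟨i, _, hs, rfl⟩

lemma subst_update {t : Tm σ ar} {n : ℕ} (ht : t.count n = 1) {a b : Tm σ ar}
    (h : Step X a b) (θ : ℕ → Tm σ ar) :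
    Step X (t.subst (Function.update θ n a)) (t.subst (Function.update θ n b)) := by
  induction t with
  | var m =>
    obtain rfl : m = n := by simpa [count] using ht
    simpa [subst] using h
  | app f ts ih =>
    obtain ⟨i, -, hi⟩ := Finset.exists_ne_zero_of_sum_ne_zero (ht.trans_ne one_ne_zero)
    have hi1 : (ts i).count n = 1 := by
      have := count_le_count_app ts i n
      omega
    rw [subst, subst, ← Function.update_idem (a := n) a b θ, ← update_subst_arg ht.le hi1 _ b,
      Function.update_idem]
    exact congr i (ih i hi1)

end Step

section Commutation

open Tm Function

variable {σ : Type} {ar : σ → ℕ} {X Y : Set (Tm σ ar × Tm σ ar)} {A : Set σ}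

/-- No left-hand side can match at a non-variable position of `p`, so the step takes place
inside the substitution. -/
lemma Step.exists_update_of_subst (hX : ∀ lr ∈ X, ¬IsVarTm lr.1 ∧ lr.1.SymbolsIn Aᶜ)
    {p : Tm σ ar} (hp : p.Linear) (hpA : p.SymbolsIn A) {θ : ℕ → Tm σ ar} {b : Tm σ ar}
    (h : Step X (p.subst θ) b) :
    ∃ n t, p.count n = 1 ∧ Step X (θ n) t ∧ b = p.subst (update θ n t) := by
  induction p generalizing b with
  | var n => exact ⟨n, b, by simp [count], h, by simp [subst]⟩
  | app f ps ih =>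
    rcases h.app_inv with ⟨l, r, ψ, hlr, hl, -⟩ | ⟨i, t', hs, rfl⟩
    · obtain ⟨hlvar, hlA⟩ := hX _ hlr
      cases l with
      | var k => exact absurd ⟨k, rfl⟩ hlvar
      | app g us =>
        simp only [subst, app.injEq] at hl
        obtain ⟨rfl, -⟩ := hl
        exact (hlA.head_mem hpA.head_mem).elim
    · obtain ⟨n, t, hn, hst, rfl⟩ := ih i (hp.arg i) (hpA.arg i) hs
      refine ⟨n, t, le_antisymm (hp n) (hn ▸ count_le_count_app ps i n), hst, ?_⟩
      rw [subst, update_subst_arg (hp n) hn]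

lemma step_or_comp_of_step_subst_lhs (hY : ∀ lr ∈ Y, ¬IsVarTm lr.2 ∧ lr.2.SymbolsIn Aᶜ)
    {l r : Tm σ ar} (hlr : (l, r) ∈ X) (hl : l.Linear) (hr : r.Linear) (hlA : l.SymbolsIn A)
    {u : Tm σ ar} {φ : ℕ → Tm σ ar} (h : Step Y u (l.subst φ)) :
    Step X u (r.subst φ) ∨ Relation.Comp (Step X) (Step Y) u (r.subst φ) := by
  obtain ⟨n, t, -, hst, rfl⟩ :=
    Step.exists_update_of_subst (fun lr hlr => hY lr.swap hlr) hl hlA h.swap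
  have hXu : Step X (l.subst (update φ n t)) (r.subst (update φ n t)) := Step.rule _ hlr
  rcases (hr n).lt_or_eq with hr0 | hr1
  · left
    rwa [subst_update_of_count_eq_zero (t := r) (by omega)] at hXu
  · right
    refine ⟨_, hXu, ?_⟩
    simpa using (Step.swap_iff.1 hst).subst_update hr1 φ

lemma comp_of_step_subst_rhs (hX : ∀ lr ∈ X, ¬IsVarTm lr.1 ∧ lr.1.SymbolsIn A)
    {l r : Tm σ ar} (hlr : (l, r) ∈ Y) (hl : l.Linear) (hr : r.Linear) (hvars : r.vars ⊆ l.vars)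
    (hrA : r.SymbolsIn Aᶜ) {θ : ℕ → Tm σ ar} {w : Tm σ ar} (h : Step X (r.subst θ) w) :
    Relation.Comp (Step X) (Step Y) (l.subst θ) w := by
  have hX' : ∀ lr ∈ X, ¬IsVarTm lr.1 ∧ lr.1.SymbolsIn Aᶜᶜ := by simpa only [compl_compl] using hX
  obtain ⟨n, t, hrn, hst, rfl⟩ := Step.exists_update_of_subst hX' hr hrA h
  have hln : l.count n = 1 := by
    have hl0 : l.count n ≠ 0 := mem_vars_iff.1 (hvars (mem_vars_iff.2 (by omega : r.count n ≠ 0)))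
    exact le_antisymm (hl n) (Nat.one_le_iff_ne_zero.2 hl0)
  exact ⟨l.subst (update θ n t), by simpa using hst.subst_update hln θ, Step.rule _ hlr⟩

theorem step_or_comp_of_step_of_step (hXlin : LinearTRS X) (hYlin : LinearTRS Y)
    (hYvars : ∀ lr ∈ Y, lr.2.vars ⊆ lr.1.vars)
    (hX : ∀ lr ∈ X, ¬IsVarTm lr.1 ∧ lr.1.SymbolsIn A)
    (hY : ∀ lr ∈ Y, ¬IsVarTm lr.2 ∧ lr.2.SymbolsIn Aᶜ)
    {u v w : Tm σ ar} (huv : Step Y u v) (hvw : Step X v w) :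
    Step X u w ∨ Relation.Comp (Step X) (Step Y) u w := by
  induction huv generalizing w with
  | rule θ hlr =>
    exact .inr (comp_of_step_subst_rhs hX hlr (hYlin _ hlr).1 (hYlin _ hlr).2 (hYvars _ hlr)
      (hY _ hlr).2 hvw)
  | @congr g us v₀ j hs ih =>
    rcases hvw.app_inv with ⟨l, r, φ, hlr, hv, rfl⟩ | ⟨i, t', hst, rfl⟩
    · exact step_or_comp_of_step_subst_lhs hY hlr (hXlin _ hlr).1 (hXlin _ hlr).2 (hX _ hlr).2
        (hv ▸ Step.congr j hs)
    · by_cases hij : i = j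
      · subst hij
        rw [update_self] at hst
        rw [update_idem]
        rcases ih hst with h | ⟨v', h₁, h₂⟩
        · exact .inl (Step.congr i h)
        · refine .inr ⟨_, Step.congr i h₁, ?_⟩
          simpa using Step.congr (ts := update us i v') i (by simpa using h₂)
      · rw [update_of_ne hij] at hst
        refine .inr ⟨_, Step.congr i hst, ?_⟩
        rw [← update_comm hij]
        exact Step.congr j (by rwa [update_of_ne (Ne.symm hij)])

end Commutation

theorem stmt_15_general {σ δ γ : Type} {ar : σ → ℕ} {arδ : δ → ℕ} {arγ : γ → ℕ}
    (R : Set (Tm σ ar × Tm σ ar)) (S : Set (Tm δ arδ × Tm δ arδ))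
    (hS : IsTRS S)
    (hRlin : LinearTRS R) (hSlin : LinearTRS S)
    (hRcf : CollapseFree R) (hScf : CollapseFree S)
    -- `Γ` is a ranked alphabet containing the disjoint alphabets `Σ` and `Δ`
    (ι₁ : σ → γ) (ι₂ : δ → γ)
    (har₁ : ∀ s, arγ (ι₁ s) = ar s) (har₂ : ∀ s, arγ (ι₂ s) = arδ s)
    (hdisj : ∀ s t, ι₁ s ≠ ι₂ t)
    -- whenever `u →_S v →_R w` (as TRSs over `Γ`) …
    (u v w : Tm γ arγ)
    (huv : Step (mapRules ι₂ har₂ S) u v)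
    (hvw : Step (mapRules ι₁ har₁ R) v w) :
    -- … either `u →_R w`, or `u →_R v' →_S w` for some `v'`.
    Step (mapRules ι₁ har₁ R) u w ∨
      ∃ v' : Tm γ arγ,
        Step (mapRules ι₁ har₁ R) u v' ∧ Step (mapRules ι₂ har₂ S) v' w := by
  have hSvars : ∀ lr ∈ mapRules ι₂ har₂ S, lr.2.vars ⊆ lr.1.vars := by
    rintro _ ⟨lr, hlr, rfl⟩
    simpa only [Tm.vars_map] using hS.2 lr hlr
  have hRsym : ∀ lr ∈ mapRules ι₁ har₁ R, ¬IsVarTm lr.1 ∧ lr.1.SymbolsIn (Set.range ι₁) := by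
    rintro _ ⟨lr, hlr, rfl⟩
    exact ⟨Tm.not_isVarTm_map ι₁ har₁ (hRcf lr hlr).1, Tm.symbolsIn_range_map ι₁ har₁ lr.1⟩
  have hSsym : ∀ lr ∈ mapRules ι₂ har₂ S, ¬IsVarTm lr.2 ∧ lr.2.SymbolsIn (Set.range ι₁)ᶜ := by
    rintro _ ⟨lr, hlr, rfl⟩
    refine ⟨Tm.not_isVarTm_map ι₂ har₂ (hScf lr hlr).2,
      (Tm.symbolsIn_range_map ι₂ har₂ lr.2).mono ?_⟩
    rintro _ ⟨t, rfl⟩ ⟨s, hs⟩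
    exact hdisj s t hs
  exact step_or_comp_of_step_of_step (hRlin.mapRules ι₁ har₁) (hSlin.mapRules ι₂ har₂) hSvars
    hRsym hSsym huv hvw

theorem stmt_15 {σ δ γ : Type} {ar : σ → ℕ} {arδ : δ → ℕ} {arγ : γ → ℕ}
    [Finite σ] [Finite δ] [Finite γ]
    (R : Set (Tm σ ar × Tm σ ar)) (S : Set (Tm δ arδ × Tm δ arδ))
    (hR : IsTRS R) (hS : IsTRS S)
    (hRlin : LinearTRS R) (hSlin : LinearTRS S)
    (hRcf : CollapseFree R) (hScf : CollapseFree S)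
    -- `Γ` is a ranked alphabet containing the disjoint alphabets `Σ` and `Δ`
    (ι₁ : σ → γ) (ι₂ : δ → γ)
    (hinj₁ : Function.Injective ι₁) (hinj₂ : Function.Injective ι₂)
    (har₁ : ∀ s, arγ (ι₁ s) = ar s) (har₂ : ∀ s, arγ (ι₂ s) = arδ s)
    (hdisj : ∀ s t, ι₁ s ≠ ι₂ t)
    -- whenever `u →_S v →_R w` (as TRSs over `Γ`) …
    (u v w : Tm γ arγ)
    (huv : Step (mapRules ι₂ har₂ S) u v)
    (hvw : Step (mapRules ι₁ har₁ R) v w) :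
    -- … either `u →_R w`, or `u →_R v' →_S w` for some `v'`.
    Step (mapRules ι₁ har₁ R) u w ∨
      ∃ v' : Tm γ arγ,
        Step (mapRules ι₁ har₁ R) u v' ∧ Step (mapRules ι₂ har₂ S) v' w :=
  stmt_15_general R S hS hRlin hSlin hRcf hScf ι₁ ι₂ har₁ har₂ hdisj u v w huv hvw
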